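/- There exists a constant c > 0 such that for every integer m ≥ 2, (1/m) · ∑_{j=1}^m cot(π(2j−1)/(4m)) ≥ c · log m. -/
import Mathlib

lemma aux_cot {θ : ℝ} (h0 : 0 < θ) (h1 : θ ≤ 1) :
    1/θ - 1 ≤ Real.cos θ / Real.sin θ := by
  have hπ := Real.pi_gt_three
  have hs : 0 < Real.sin θ := Real.sin_pos_of_pos_of_lt_pi h0 (by linarith)
  have hsle : Real.sin θ ≤ θ := Real.sin_le h0.le
  have hc : 1 - θ ≤ Real.cos θ := by
    have := Real.one_sub_sq_div_two_le_cos (x := θ)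
    nlinarith
  have h : (1-θ)/θ ≤ Real.cos θ / Real.sin θ :=
    div_le_div₀ (by linarith) hc hs hsle
  have : 1/θ - 1 = (1-θ)/θ := by field_simp
  linarith [this ▸ h]

lemma aux_harm : ∀ k : ℕ, Real.log ((k:ℝ)+1) ≤ 2 * ∑ j ∈ Finset.range k, (1:ℝ)/(2*(j:ℝ)+1) := by
  intro k
  induction k with
  | zero => simp
  | succ n ih =>
    rw [Finset.sum_range_succ]
    have hlog : Real.log ((n:ℝ)+2) - Real.log ((n:ℝ)+1) ≤ 1/((n:ℝ)+1) := by
      rw [← Real.log_div (by positivity) (by positivity)]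
      have h1 := Real.log_le_sub_one_of_pos (x := (((n:ℝ)+2))/(((n:ℝ)+1))) (by positivity)
      have h2 : (((n:ℝ)+2))/(((n:ℝ)+1)) - 1 = 1/((n:ℝ)+1) := by
        field_simp
        norm_num
      linarith
    have h3 : 1/((n:ℝ)+1) ≤ 2 * (1/(2*(n:ℝ)+1)) := by
      rw [mul_one_div, div_le_div_iff₀ (by positivity) (by positivity)]
      nlinarith
    have hre : Real.log ((n:ℝ)+1+1) = Real.log ((n:ℝ)+2) := by ring_nf
    push_cast
    rw [hre]
    linarith

set_option maxHeartbeats 1000000 in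
/-- Lower bound on the condition number of the closed-form Chebyshev multiproduct
coefficients: `(1 / m) * ∑_{j=1}^m cot (π (2 j - 1) / (4 m)) ≥ c * log m`
(the sum below is indexed from `0`, so `2 j - 1` becomes `2 j + 1`). -/
theorem chebyshev_condition_number_lower_bound :
    ∃ c : ℝ, 0 < c ∧ ∀ m : ℕ, 2 ≤ m →
      c * Real.log m ≤
        (1 / (m : ℝ)) * ∑ j ∈ Finset.range m,
          Real.cos (Real.pi * (2 * (j : ℕ) + 1) / (4 * m)) /
            Real.sin (Real.pi * (2 * (j : ℕ) + 1) / (4 * m)) := by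
  refine ⟨1/10, by norm_num, fun m hm => ?_⟩
  have hπ3 := Real.pi_gt_three
  have hπ315 := Real.pi_lt_d2
  have hmR : (2:ℝ) ≤ (m:ℝ) := by exact_mod_cast hm
  have hm0 : (0:ℝ) < (m:ℝ) := by linarith
  -- nonnegativity of every term
  have htpos : ∀ j ∈ Finset.range m, (0:ℝ) ≤
      Real.cos (Real.pi * (2 * (j:ℝ) + 1) / (4 * m)) /
        Real.sin (Real.pi * (2 * (j:ℝ) + 1) / (4 * m)) := by
    intro j hj
    have hjm : (j:ℝ) + 1 ≤ m := by exact_mod_cast Finset.mem_range.mp hj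
    have hx0 : 0 < Real.pi * (2 * (j:ℝ) + 1) / (4 * m) := by positivity
    have hxlt : Real.pi * (2 * (j:ℝ) + 1) / (4 * m) < Real.pi / 2 := by
      rw [div_lt_div_iff₀ (by positivity) (by norm_num)]
      nlinarith [mul_lt_mul_of_pos_left (show 2*(j:ℝ)+1 < 2*(m:ℝ) by linarith)
        (show (0:ℝ) < Real.pi by linarith)]
    
    have hc : 0 < Real.cos (Real.pi * (2 * (j:ℝ) + 1) / (4 * m)) :=
      Real.cos_pos_of_mem_Ioo ⟨by linarith, hxlt⟩
    have hs : 0 < Real.sin (Real.pi * (2 * (j:ℝ) + 1) / (4 * m)) :=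
      Real.sin_pos_of_pos_of_lt_pi hx0 (by linarith)
    positivity
  rcases le_or_gt m 1000 with hsmall | hbig
  · -- small case: use only the j = 0 term
    have hsmallR : (m:ℝ) ≤ 1000 := by exact_mod_cast hsmall
    have h0mem : 0 ∈ Finset.range m := Finset.mem_range.mpr (by omega)
    have hsingle := Finset.single_le_sum htpos h0mem
    have hθ : Real.pi * (2 * ((0:ℕ):ℝ) + 1) / (4 * m) = Real.pi / (4 * m) := by
      norm_num
    have h0 : 0 < Real.pi / (4 * m) := by positivity
    have h1 : Real.pi / (4 * m) ≤ 1 := by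
      rw [div_le_one (by positivity)]; nlinarith
    have hcot := aux_cot h0 h1
    have hinv : 1 / (Real.pi / (4 * m)) = 4 * m / Real.pi := one_div_div _ _
    rw [hinv] at hcot
    rw [hθ] at hsingle
    -- (1/m) * sum ≥ (1/m) * (4m/π - 1) = 4/π - 1/m ≥ 4/π - 1/2
    have hsum : 4 * (m:ℝ) / Real.pi - 1 ≤
        ∑ j ∈ Finset.range m,
          Real.cos (Real.pi * (2 * (j:ℝ) + 1) / (4 * m)) /
            Real.sin (Real.pi * (2 * (j:ℝ) + 1) / (4 * m)) := le_trans hcot hsingle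
    have hrhs : 4 / Real.pi - 1 / 2 ≤ (1 / (m:ℝ)) *
        ∑ j ∈ Finset.range m,
          Real.cos (Real.pi * (2 * (j:ℝ) + 1) / (4 * m)) /
            Real.sin (Real.pi * (2 * (j:ℝ) + 1) / (4 * m)) := by
      have hmne : (m:ℝ) ≠ 0 := ne_of_gt hm0
      have hπne : Real.pi ≠ 0 := by positivity
      have h2 : (1 / (m:ℝ)) * (4 * (m:ℝ) / Real.pi - 1) = 4 / Real.pi - 1 / m := by
        field_simp
      have h3 : 4 / Real.pi - 1 / (m:ℝ) ≤ (1 / (m:ℝ)) * ∑ j ∈ Finset.range m,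
          Real.cos (Real.pi * (2 * (j:ℝ) + 1) / (4 * m)) /
            Real.sin (Real.pi * (2 * (j:ℝ) + 1) / (4 * m)) := by
        rw [← h2]
        exact mul_le_mul_of_nonneg_left hsum (by positivity)
      have h4 : 1 / (m:ℝ) ≤ 1 / 2 := by
        rw [div_le_div_iff₀ hm0 (by norm_num)]; linarith
      linarith
    -- left side: (1/10) log m ≤ 7/10
    have hlogm : Real.log m ≤ 7 := by
      have hexp : (1000:ℝ) ≤ Real.exp 7 := by
        have h1 : Real.exp 7 = Real.exp 1 ^ (7:ℕ) := by
          rw [← Real.exp_nat_mul]; norm_num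
        have h2 : (2.7:ℝ) ^ (7:ℕ) ≤ Real.exp 1 ^ (7:ℕ) :=
          pow_le_pow_left₀ (by norm_num) (by linarith [Real.exp_one_gt_d9]) 7
        rw [h1]
        nlinarith
      calc Real.log m ≤ Real.log 1000 := Real.log_le_log hm0 hsmallR
        _ ≤ 7 := by
            rw [Real.log_le_iff_le_exp (by norm_num)]; exact hexp
    have hpi4 : (12:ℝ)/10 ≤ 4 / Real.pi := by
      rw [le_div_iff₀ (by linarith)]; nlinarith
    linarith
  · -- large case: m > 1000
    have hm1000 : 1000 < m := hbig
    set k := m / 2 with hk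
    have hk2 : 2 * k ≤ m := by omega
    have hk1 : m ≤ 2 * k + 1 := by omega
    have hk500 : 500 ≤ k := by omega
    have hkR : 2 * (k:ℝ) ≤ m := by exact_mod_cast hk2
    have hkR1 : (m:ℝ) ≤ 2 * k + 1 := by exact_mod_cast hk1
    have hsub : ∑ j ∈ Finset.range k,
        Real.cos (Real.pi * (2 * (j:ℝ) + 1) / (4 * m)) /
          Real.sin (Real.pi * (2 * (j:ℝ) + 1) / (4 * m)) ≤
        ∑ j ∈ Finset.range m,
          Real.cos (Real.pi * (2 * (j:ℝ) + 1) / (4 * m)) /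
            Real.sin (Real.pi * (2 * (j:ℝ) + 1) / (4 * m)) :=
      Finset.sum_le_sum_of_subset_of_nonneg
        (Finset.range_subset_range.mpr (by omega)) (fun i hi _ => htpos i hi)
    have hbound : ∀ j ∈ Finset.range k,
        4 * (m:ℝ) / (Real.pi * (2 * (j:ℝ) + 1)) - 1 ≤
        Real.cos (Real.pi * (2 * (j:ℝ) + 1) / (4 * m)) /
          Real.sin (Real.pi * (2 * (j:ℝ) + 1) / (4 * m)) := by
      intro j hj
      have hjk : (j:ℕ) < k := Finset.mem_range.mp hj
      have hjR : 2 * (j:ℝ) + 1 ≤ m := by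
        have : 2 * j + 1 ≤ m := by omega
        exact_mod_cast this
      have h0 : 0 < Real.pi * (2 * (j:ℝ) + 1) / (4 * m) := by positivity
      have h1 : Real.pi * (2 * (j:ℝ) + 1) / (4 * m) ≤ 1 := by
        rw [div_le_one (by positivity)]; nlinarith
      have hcot := aux_cot h0 h1
      have hinv : 1 / (Real.pi * (2 * (j:ℝ) + 1) / (4 * m)) =
          4 * m / (Real.pi * (2 * (j:ℝ) + 1)) := one_div_div _ _
      rw [hinv] at hcot
      exact hcot
    have hsum1 := Finset.sum_le_sum hbound
    have hsum2 : ∑ j ∈ Finset.range k, (4 * (m:ℝ) / (Real.pi * (2 * (j:ℝ) + 1)) - 1) =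
        (4 * (m:ℝ) / Real.pi) * (∑ j ∈ Finset.range k, 1 / (2 * (j:ℝ) + 1)) - k := by
      have h1 : ∀ j ∈ Finset.range k, 4*(m:ℝ)/(Real.pi*(2*(j:ℝ)+1)) - 1
          = (4*(m:ℝ)/Real.pi) * (1/(2*(j:ℝ)+1)) - 1 := fun j _ => by
        rw [mul_one_div, div_div]
      rw [Finset.sum_congr rfl h1, Finset.sum_sub_distrib, ← Finset.mul_sum,
        Finset.sum_const, Finset.card_range, nsmul_eq_mul, mul_one]
    have hharm := aux_harm k
    have hS : 0 ≤ ∑ j ∈ Finset.range k, 1 / (2 * (j:ℝ) + 1) :=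
      Finset.sum_nonneg fun j _ => by positivity
    -- sum ≥ (2m/π) log(k+1) - k
    have hstep1 : (4 * (m:ℝ) / Real.pi) * (Real.log ((k:ℝ)+1) / 2) - k ≤
        (4 * (m:ℝ) / Real.pi) * (∑ j ∈ Finset.range k, 1 / (2 * (j:ℝ) + 1)) - k := by
      have : Real.log ((k:ℝ)+1) / 2 ≤ ∑ j ∈ Finset.range k, 1 / (2 * (j:ℝ) + 1) := by
        linarith
      have h4mπ : 0 ≤ 4 * (m:ℝ) / Real.pi := by positivity
      nlinarith
    have hlogk : Real.log (m:ℝ) - Real.log 2 ≤ Real.log ((k:ℝ)+1) := by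
      have h1 : (m:ℝ) / 2 ≤ (k:ℝ) + 1 := by linarith
      have h2 : Real.log ((m:ℝ)/2) ≤ Real.log ((k:ℝ)+1) :=
        Real.log_le_log (by positivity) h1
      rw [Real.log_div (by positivity) (by norm_num)] at h2
      exact h2
    have hlog2a : Real.log 2 ≤ 1 := by
      have := Real.log_le_sub_one_of_pos (x := (2:ℝ)) (by norm_num)
      linarith
    have hlog2b : 0 ≤ Real.log 2 := Real.log_nonneg (by norm_num)
    have hlogm3 : 3 ≤ Real.log m := by
      have hexp : Real.exp 3 ≤ (m:ℝ) := by
        have h1 : Real.exp 3 = Real.exp 1 ^ (3:ℕ) := by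
          rw [← Real.exp_nat_mul]; norm_num
        have h2 : Real.exp 1 ^ (3:ℕ) ≤ (2.7182818286:ℝ) ^ (3:ℕ) :=
          pow_le_pow_left₀ (Real.exp_pos 1).le (Real.exp_one_lt_d9).le 3
        have hmR1000 : (1000:ℝ) < (m:ℝ) := by exact_mod_cast hm1000
        have h3 : (2.7182818286:ℝ) ^ (3:ℕ) ≤ 1000 := by norm_num
        rw [h1]
        linarith
      calc (3:ℝ) = Real.log (Real.exp 3) := (Real.log_exp 3).symm
        _ ≤ Real.log m := Real.log_le_log (Real.exp_pos 3) hexp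
    -- combine
    have hL : Real.log m - Real.log 2 ≤ Real.log ((k:ℝ)+1) := hlogk
    have hchain : (4 * (m:ℝ) / Real.pi) * ((Real.log m - Real.log 2) / 2) - (m:ℝ)/2 ≤
        ∑ j ∈ Finset.range m,
          Real.cos (Real.pi * (2 * (j:ℝ) + 1) / (4 * m)) /
            Real.sin (Real.pi * (2 * (j:ℝ) + 1) / (4 * m)) := by
      have h4mπ : 0 ≤ 4 * (m:ℝ) / Real.pi := by positivity
      have hmono : (4 * (m:ℝ) / Real.pi) * ((Real.log m - Real.log 2) / 2) ≤
          (4 * (m:ℝ) / Real.pi) * (Real.log ((k:ℝ)+1) / 2) := by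
        apply mul_le_mul_of_nonneg_left _ h4mπ
        linarith
      have hkm : (k:ℝ) ≤ (m:ℝ)/2 := by linarith
      calc (4 * (m:ℝ) / Real.pi) * ((Real.log m - Real.log 2) / 2) - (m:ℝ)/2
          ≤ (4 * (m:ℝ) / Real.pi) * (Real.log ((k:ℝ)+1) / 2) - k := by linarith
        _ ≤ (4 * (m:ℝ) / Real.pi) * (∑ j ∈ Finset.range k, 1 / (2 * (j:ℝ) + 1)) - k :=
            hstep1
        _ = ∑ j ∈ Finset.range k, (4 * (m:ℝ) / (Real.pi * (2 * (j:ℝ) + 1)) - 1) :=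
            hsum2.symm
        _ ≤ ∑ j ∈ Finset.range k,
            Real.cos (Real.pi * (2 * (j:ℝ) + 1) / (4 * m)) /
              Real.sin (Real.pi * (2 * (j:ℝ) + 1) / (4 * m)) := hsum1
        _ ≤ _ := hsub
    have hfinal : (2 / Real.pi) * (Real.log m - Real.log 2) - 1/2 ≤
        (1 / (m:ℝ)) * ∑ j ∈ Finset.range m,
          Real.cos (Real.pi * (2 * (j:ℝ) + 1) / (4 * m)) /
            Real.sin (Real.pi * (2 * (j:ℝ) + 1) / (4 * m)) := by
      have heq : (1 / (m:ℝ)) * ((4 * (m:ℝ) / Real.pi) * ((Real.log m - Real.log 2) / 2) - (m:ℝ)/2)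
          = (2 / Real.pi) * (Real.log m - Real.log 2) - 1/2 := by
        field_simp
        ring
      rw [← heq]
      exact mul_le_mul_of_nonneg_left hchain (by positivity)
    have ha : (63:ℝ)/100 ≤ 2 / Real.pi := by
      rw [le_div_iff₀ (by linarith)]; nlinarith
    have hb : 2 / Real.pi ≤ 2/3 := by
      rw [div_le_div_iff₀ (by linarith) (by norm_num)]; linarith
    have hprod : (63:ℝ)/100 * (Real.log m - 1) ≤ (2/Real.pi) * (Real.log m - Real.log 2) := by
      apply mul_le_mul ha (by linarith) (by linarith) (by linarith)
    linarith
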